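/- A weak contact semilattice S satisfies (D1) if and only if S can be embedded into a complete atomic Boolean algebra equipped with a weak contact relation; concretely, if and only if there exist a set X, a weak contact relation δ_P on the powerset of X (ordered by inclusion, with least element ∅), and an injective map h : S → 𝒫(X) with h(0) = ∅, h(a + b) = h(a) ∪ h(b) for all a, b ∈ S, and a δ_S b if and only if h(a) δ_P h(b) for all a, b ∈ S. -/

import Mathlib

/-- A weak contact relation on a poset with least element `⊥`. -/
def IsWeakContact {S : Type*} [PartialOrder S] [OrderBot S] (δ : S → S → Prop) : Prop :=
  (∀ a b : S, δ a b → a ≠ ⊥ ∧ b ≠ ⊥) ∧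
  (∀ a : S, a ≠ ⊥ → δ a a) ∧
  (∀ a b : S, δ a b → δ b a) ∧
  (∀ a b a₁ b₁ : S, δ a b → a ≤ a₁ → b ≤ b₁ → δ a₁ b₁)

/-- Condition (D1). -/
def CondD1 {S : Type*} [SemilatticeSup S] [OrderBot S] (δ : S → S → Prop) : Prop :=
  ∀ a b c₀ c₁ : S, ¬ δ c₀ c₁ → b ≤ a ⊔ c₀ → b ≤ a ⊔ c₁ → b ≤ a


/-!
If `S` embeds into a powerset carrying a weak contact relation, (D1) holds in `S` because it holds
in every distributive lattice with a weak contact: `b ≤ (a ⊔ c₀) ⊓ (a ⊔ c₁) = a ⊔ (c₀ ⊓ c₁)`, and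
`c₀ ⊓ c₁ ≠ ⊥` would force `c₀ δ c₁`.

Conversely, let `J` be an ideal maximal among those avoiding `a`. Every `x ∉ J` satisfies
`a ≤ w ⊔ x` for some `w ∈ J`, so if `x, y ∉ J` were not in contact, (D1) would put `a` in `J`.
Taking such ideals as points and sending `a` to the set of ideals missing it gives a
join-preserving embedding that separates elements, and the contact on the powerset generated by
the image of `δ` together with "having a common point" restricts to `δ`.
-/

open Order

section Transfer

variable {S T : Type*} [SemilatticeSup S] [SemilatticeSup T] {f : S → T}

lemma map_le_map_iff_of_injective_of_map_sup (hinj : Function.Injective f)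
    (hsup : ∀ a b, f (a ⊔ b) = f a ⊔ f b) {a b : S} : f a ≤ f b ↔ a ≤ b := by
  rw [← sup_eq_right, ← hsup, hinj.eq_iff, sup_eq_right]

lemma CondD1.of_injective_of_map_sup [OrderBot S] [OrderBot T] {δS : S → S → Prop}
    {δT : T → T → Prop} (hT : CondD1 δT) (hinj : Function.Injective f)
    (hsup : ∀ a b, f (a ⊔ b) = f a ⊔ f b) (hδ : ∀ a b, δS a b ↔ δT (f a) (f b)) :
    CondD1 δS := by
  intro a b c₀ c₁ hc hb₀ hb₁
  have hle {x y : S} := map_le_map_iff_of_injective_of_map_sup hinj hsup (a := x) (b := y)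
  refine hle.1 (hT (f a) (f b) (f c₀) (f c₁) (mt (hδ c₀ c₁).2 hc) ?_ ?_) <;> rwa [← hsup, hle]

end Transfer

lemma condD1_of_isWeakContact {L : Type*} [DistribLattice L] [OrderBot L] {δ : L → L → Prop}
    (hδ : IsWeakContact δ) : CondD1 δ := by
  obtain ⟨-, hrefl, -, hext⟩ := hδ
  intro a b c₀ c₁ hc hb₀ hb₁
  have hb : b ≤ a ⊔ c₀ ⊓ c₁ := (le_inf hb₀ hb₁).trans_eq (sup_inf_left _ _ _).symm
  by_cases hmeet : c₀ ⊓ c₁ = ⊥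
  · simpa [hmeet] using hb
  · exact absurd (hext _ _ _ _ (hrefl _ hmeet) inf_le_left inf_le_right) hc

section InducedContact

variable {S L : Type*} [PartialOrder S] [OrderBot S] [Lattice L] [OrderBot L]

/-- The least weak contact on `L` containing the image of `δ` under `h`. -/
def inducedContact (δ : S → S → Prop) (h : S → L) (A B : L) : Prop :=
  (∃ a b, δ a b ∧ h a ≤ A ∧ h b ≤ B) ∨ A ⊓ B ≠ ⊥

variable {δ : S → S → Prop} {h : S → L}

lemma isWeakContact_inducedContact (hδ : IsWeakContact δ) (hbot : ∀ a, h a = ⊥ → a = ⊥) :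
    IsWeakContact (inducedContact δ h) := by
  obtain ⟨hne, -, hsymm, -⟩ := hδ
  refine ⟨?_, fun A hA => Or.inr (by rwa [inf_idem]), ?_, ?_⟩
  · rintro A B (⟨a, b, hab, hA, hB⟩ | hAB)
    · exact ⟨ne_bot_of_le_ne_bot (mt (hbot a) (hne a b hab).1) hA,
        ne_bot_of_le_ne_bot (mt (hbot b) (hne a b hab).2) hB⟩
    · exact ⟨fun hA => hAB (by simp [hA]), fun hB => hAB (by simp [hB])⟩
  · rintro A B (⟨a, b, hab, hA, hB⟩ | hAB)
    · exact Or.inl ⟨b, a, hsymm a b hab, hB, hA⟩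
    · exact Or.inr (by rwa [inf_comm])
  · rintro A B A₁ B₁ (⟨a, b, hab, hA, hB⟩ | hAB) hAA₁ hBB₁
    · exact Or.inl ⟨a, b, hab, hA.trans hAA₁, hB.trans hBB₁⟩
    · exact Or.inr (ne_bot_of_le_ne_bot hAB (inf_le_inf hAA₁ hBB₁))

lemma inducedContact_apply_iff (hδ : IsWeakContact δ) (hle : ∀ a b, h a ≤ h b → a ≤ b)
    (hmeet : ∀ a b, h a ⊓ h b ≠ ⊥ → δ a b) {a b : S} :
    inducedContact δ h (h a) (h b) ↔ δ a b := by
  refine ⟨?_, fun hab => Or.inl ⟨a, b, hab, le_rfl, le_rfl⟩⟩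
  rintro (⟨a', b', hab', ha, hb⟩ | hab)
  · exact hδ.2.2.2 a' b' a b hab' (hle a' a ha) (hle b' b hb)
  · exact hmeet a b hab

end InducedContact

namespace Order.Ideal

lemma exists_le_maximal_notMem {P : Type*} [LE P] {a : P} {I : Ideal P} (ha : a ∉ I) :
    ∃ J, I ≤ J ∧ Maximal (fun K : Ideal P => a ∉ K) J := by
  refine zorn_le_nonempty₀ {K | a ∉ K} (fun c hc hchain K hK => ?_) I ha
  have hunion : IsIdeal (⋃₀ (SetLike.coe '' c)) :=
    isIdeal_sUnion_of_isChain (by simp [Ideal.isIdeal])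
      (hchain.image_of_map_rel _ _ SetLike.coe fun _ _ => id) ⟨K, K, hK, rfl⟩
  refine ⟨hunion.toIdeal, ?_, fun J hJ => ?_⟩
  · simpa [mem_toIdeal] using fun J hJ => hc hJ
  · simpa [le_toIdeal] using Set.subset_biUnion_of_mem (u := SetLike.coe) hJ

lemma exists_le_sup_of_maximal_notMem {P : Type*} [SemilatticeSup P] [IsCodirectedOrder P]
    {a z : P} {J : Ideal P} (hJ : Maximal (fun K : Ideal P => a ∉ K) J) (hz : z ∉ J) :
    ∃ w ∈ J, a ≤ w ⊔ z := by
  have ha : a ∈ J ⊔ principal z := not_not.1 (hJ.not_prop_of_gt (lt_sup_principal_of_notMem hz))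
  obtain ⟨w, hw, u, hu, hau⟩ := mem_sup.1 ha
  exact ⟨w, hw, hau.trans (sup_le_sup_left (mem_principal.1 hu) w)⟩

end Order.Ideal

section ContactIdeal

variable {S : Type} [SemilatticeSup S] {δ : S → S → Prop}

/-- The points of the representation: ideals whose complement is pairwise in contact. -/
def ContactIdeal (δ : S → S → Prop) : Type :=
  {I : Ideal S // ∀ x ∉ I, ∀ y ∉ I, δ x y}

lemma contact_of_maximal_notMem [OrderBot S] (hD1 : CondD1 δ) {a : S} {J : Ideal S}
    (hJ : Maximal (fun K : Ideal S => a ∉ K) J) {x y : S} (hx : x ∉ J) (hy : y ∉ J) : δ x y := by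
  by_contra hxy
  obtain ⟨w, hw, haw⟩ := Ideal.exists_le_sup_of_maximal_notMem hJ hx
  obtain ⟨w', hw', haw'⟩ := Ideal.exists_le_sup_of_maximal_notMem hJ hy
  have hx' : a ≤ (w ⊔ w') ⊔ x := haw.trans (sup_le_sup_right le_sup_left x)
  have hy' : a ≤ (w ⊔ w') ⊔ y := haw'.trans (sup_le_sup_right le_sup_right y)
  exact hJ.prop (J.lower (hD1 _ _ _ _ hxy hx' hy') (Ideal.sup_mem hw hw'))

lemma exists_contactIdeal_mem_notMem [OrderBot S] (hD1 : CondD1 δ) {a b : S} (hab : ¬ a ≤ b) :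
    ∃ I : ContactIdeal δ, b ∈ I.1 ∧ a ∉ I.1 := by
  obtain ⟨J, hbJ, hJ⟩ :=
    Ideal.exists_le_maximal_notMem (I := Ideal.principal b) (mt Ideal.mem_principal.1 hab)
  exact ⟨⟨J, fun x hx y hy => contact_of_maximal_notMem hD1 hJ hx hy⟩,
    Ideal.principal_le_iff.1 hbJ, hJ.prop⟩

variable (δ) in
def contactIdealMap (a : S) : Set (ContactIdeal δ) :=
  {I | a ∉ I.1}

lemma contactIdealMap_bot [OrderBot S] : contactIdealMap δ ⊥ = ∅ :=
  Set.eq_empty_of_forall_notMem fun I hI => hI I.1.bot_mem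

lemma contactIdealMap_sup (a b : S) :
    contactIdealMap δ (a ⊔ b) = contactIdealMap δ a ∪ contactIdealMap δ b := by
  ext I
  simp only [contactIdealMap, Set.mem_ofPred_eq, Set.mem_union, Ideal.sup_mem_iff, not_and_or]

lemma le_of_contactIdealMap_subset [OrderBot S] (hD1 : CondD1 δ) {a b : S}
    (hab : contactIdealMap δ a ⊆ contactIdealMap δ b) : a ≤ b := by
  by_contra hnle
  obtain ⟨I, hb, ha⟩ := exists_contactIdeal_mem_notMem hD1 hnle
  exact hab ha hb

lemma contactIdealMap_injective [OrderBot S] (hD1 : CondD1 δ) :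
    Function.Injective (contactIdealMap δ) := fun _ _ hab =>
  le_antisymm (le_of_contactIdealMap_subset hD1 hab.le) (le_of_contactIdealMap_subset hD1 hab.ge)

lemma contact_of_contactIdealMap_inter_ne_bot (a b : S)
    (hab : contactIdealMap δ a ⊓ contactIdealMap δ b ≠ ⊥) : δ a b := by
  obtain ⟨I, ha, hb⟩ := Set.nonempty_iff_ne_empty.2 hab
  exact I.2 a ha b hb

end ContactIdeal

theorem stmt3 {S : Type} [SemilatticeSup S] [OrderBot S] (δS : S → S → Prop)
    (hwc : IsWeakContact δS) :
    CondD1 δS ↔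
      ∃ (X : Type) (δP : Set X → Set X → Prop) (h : S → Set X),
        IsWeakContact δP ∧
        Function.Injective h ∧
        h ⊥ = ∅ ∧
        (∀ a b : S, h (a ⊔ b) = h a ∪ h b) ∧
        (∀ a b : S, δS a b ↔ δP (h a) (h b)) := by
  constructor
  · intro hD1
    have hinj := contactIdealMap_injective hD1
    have hbot : ∀ a, contactIdealMap δS a = ⊥ → a = ⊥ := fun a ha =>
      hinj (ha.trans contactIdealMap_bot.symm)
    have hle : ∀ a b, contactIdealMap δS a ≤ contactIdealMap δS b → a ≤ b := fun _ _ =>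
      le_of_contactIdealMap_subset hD1
    exact ⟨ContactIdeal δS, inducedContact δS (contactIdealMap δS), contactIdealMap δS,
      isWeakContact_inducedContact hwc hbot, hinj, contactIdealMap_bot, contactIdealMap_sup,
      fun a b => (inducedContact_apply_iff hwc hle contact_of_contactIdealMap_inter_ne_bot).symm⟩
  · rintro ⟨X, δP, h, hP, hinj, -, hsup, hδ⟩
    exact (condD1_of_isWeakContact hP).of_injective_of_map_sup hinj hsup hδ
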